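/- arXiv:2402.07546 — 2 statements merged into one kernel-verified Lean document; each statement's English description precedes it below -/
import Mathlib

section
/- Let L > 0 and u(x) = -c · cos(πx/L) for a constant c > 0 on Ω = [-L, L]. If V : [-L, L] → ℝ is even and strictly decreasing on [0, L], then ∫_{-L}^{L} u(x) V(x) dx < 0. -/
/-!
Write `u = -c g` with `g x = cos (π x / L)`. Since `g V` is even, `∫_{-L}^{L} g V = 2 ∫_0^L g V`.
Folding `[0, L]` about its midpoint and using `g (L - x) = -g x` gives
`∫_0^L g V = ∫_0^{L/2} g x (V x - V (L - x)) dx`, whose integrand is positive on `(0, L/2)`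
because `g > 0` there and `V` is strictly decreasing.
-/

open Real intervalIntegral Set MeasureTheory

theorem half_mem_uIcc_zero (a : ℝ) : a / 2 ∈ uIcc 0 a := by
  rcases le_total 0 a with ha | ha
  · exact mem_uIcc.2 (Or.inl ⟨by linarith, by linarith⟩)
  · exact mem_uIcc.2 (Or.inr ⟨by linarith, by linarith⟩)

section Reflection

variable {E : Type*} [NormedAddCommGroup E] {f : ℝ → E} {a : ℝ}

theorem IntervalIntegrable.comp_sub_left_half (hf : IntervalIntegrable f volume 0 a) :
    IntervalIntegrable (fun x => f (a - x)) volume 0 (a / 2) := by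
  simpa [show a - a / 2 = a / 2 by ring] using
    ((hf.mono_set (uIcc_subset_uIcc_right (half_mem_uIcc_zero a))).comp_sub_left a).symm

variable [NormedSpace ℝ E]

theorem integral_neg_to_eq_two_smul_of_even (heven : ∀ x, f (-x) = f x)
    (hf : IntervalIntegrable f volume 0 a) :
    ∫ x in -a..a, f x = (2 : ℝ) • ∫ x in 0..a, f x := by
  have hf_neg : IntervalIntegrable f volume (-a) 0 := by
    simpa [heven] using (hf.comp_sub_left 0).symm
  have h_left : ∫ x in -a..0, f x = ∫ x in 0..a, f x := by
    simpa [heven] using (integral_comp_neg (a := 0) (b := a) f).symm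
  rw [← integral_add_adjacent_intervals hf_neg hf, h_left, two_smul]

theorem integral_eq_integral_half_add_comp_sub_left (hf : IntervalIntegrable f volume 0 a) :
    ∫ x in 0..a, f x = ∫ x in 0..a / 2, (f x + f (a - x)) := by
  have h_lower_int := hf.mono_set (uIcc_subset_uIcc_left (half_mem_uIcc_zero a))
  have h_upper_int := hf.mono_set (uIcc_subset_uIcc_right (half_mem_uIcc_zero a))
  have h_upper : ∫ x in a / 2..a, f x = ∫ x in 0..a / 2, f (a - x) := by
    rw [integral_comp_sub_left f a]
    congr 1 <;> ring
  rw [← integral_add_adjacent_intervals h_lower_int h_upper_int, h_upper,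
    integral_add h_lower_int hf.comp_sub_left_half]

end Reflection

theorem intervalIntegrable_mul_of_antitoneOn {g V : ℝ → ℝ} {a b : ℝ} (hab : a ≤ b)
    (hg : ContinuousOn g (Icc a b)) (hV : AntitoneOn V (Icc a b)) :
    IntervalIntegrable (fun x => g x * V x) volume a b := by
  rw [← uIcc_of_le hab] at hg hV
  exact hV.intervalIntegrable.continuousOn_mul hg

theorem integral_mul_pos_of_antisymm_of_strictAntiOn {g V : ℝ → ℝ} {a : ℝ} (ha : 0 < a)
    (hg : ContinuousOn g (Icc 0 a)) (hg_antisymm : ∀ x, g (a - x) = -g x)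
    (hg_pos : ∀ x ∈ Ioo 0 (a / 2), 0 < g x) (hV : StrictAntiOn V (Icc 0 a)) :
    0 < ∫ x in 0..a, g x * V x := by
  have hgV := intervalIntegrable_mul_of_antitoneOn ha.le hg hV.antitoneOn
  rw [integral_eq_integral_half_add_comp_sub_left hgV]
  refine intervalIntegral_pos_of_pos_on
    ((hgV.mono_set (uIcc_subset_uIcc_left (half_mem_uIcc_zero a))).add hgV.comp_sub_left_half)
    (fun x hx => ?_) (by linarith)
  have hx_mem : x ∈ Icc 0 a := ⟨hx.1.le, by linarith [hx.2]⟩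
  have hax_mem : a - x ∈ Icc 0 a := ⟨by linarith [hx.2], by linarith [hx.1]⟩
  have hV_gap : 0 < V x - V (a - x) := sub_pos.2 (hV hx_mem hax_mem (by linarith [hx.2]))
  calc 0 < g x * (V x - V (a - x)) := mul_pos (hg_pos x hx) hV_gap
    _ = g x * V x + g (a - x) * V (a - x) := by rw [hg_antisymm]; ring

theorem cos_pi_mul_sub_div (L x : ℝ) (hL : L ≠ 0) :
    cos (π * (L - x) / L) = -cos (π * x / L) := by
  rw [show π * (L - x) / L = π - π * x / L by field_simp, cos_pi_sub]

theorem cos_pi_mul_div_pos {L x : ℝ} (hL : 0 < L) (hx : x ∈ Ioo 0 (L / 2)) :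
    0 < cos (π * x / L) := by
  apply cos_pos_of_mem_Ioo
  constructor
  · have : 0 < π * x / L := div_pos (mul_pos pi_pos hx.1) hL
    linarith [pi_pos]
  · rw [div_lt_iff₀ hL]
    nlinarith [pi_pos, hx.2]

theorem stmt_12_general (L c : ℝ) (hL : 0 < L) (hc : 0 < c)
    (u : ℝ → ℝ) (hu : ∀ x, u x = -c * Real.cos (π * x / L))
    (V : ℝ → ℝ)
    (hVeven : ∀ x, V (-x) = V x)
    (hVdec : StrictAntiOn V (Set.Icc (0:ℝ) L)) :
    ∫ x in (-L)..L, u x * V x < 0 := by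
  set g : ℝ → ℝ := fun x => cos (π * x / L)
  have hgV_even : ∀ x, g (-x) * V (-x) = g x * V x := by
    intro x
    simp only [g, hVeven, mul_neg, neg_div, cos_neg]
  have hg : ContinuousOn g (Icc 0 L) := by fun_prop
  have hgV_int := intervalIntegrable_mul_of_antitoneOn hL.le hg hVdec.antitoneOn
  have h_pos : 0 < ∫ x in 0..L, g x * V x :=
    integral_mul_pos_of_antisymm_of_strictAntiOn hL hg
      (fun x => cos_pi_mul_sub_div L x hL.ne') (fun x hx => cos_pi_mul_div_pos hL hx) hVdec
  calc ∫ x in (-L)..L, u x * V x = -c * ∫ x in (-L)..L, g x * V x := by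
        rw [← intervalIntegral.integral_const_mul]
        simp only [hu, g, mul_assoc]
    _ = -c * (2 * ∫ x in 0..L, g x * V x) := by
        rw [integral_neg_to_eq_two_smul_of_even hgV_even hgV_int, smul_eq_mul]
    _ < 0 := mul_neg_of_neg_of_pos (neg_lt_zero.2 hc) (mul_pos two_pos h_pos)

theorem stmt_12 (L c : ℝ) (hL : 0 < L) (hc : 0 < c)
    (u : ℝ → ℝ) (hu : ∀ x, u x = -c * Real.cos (π * x / L))
    (V : ℝ → ℝ) (hVcont : ContinuousOn V (Set.Icc (-L) L))
    (hVeven : ∀ x, V (-x) = V x)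
    (hVdec : StrictAntiOn V (Set.Icc (0:ℝ) L)) :
    ∫ x in (-L)..L, u x * V x < 0 :=
  stmt_12_general L c hL hc u hu V hVeven hVdec
end

section
/- Let u, P : [0,∞) → ℝ satisfy the ODE system V' = V − V² − h P V, P' = P − P² + γ h P V with (γ − 1)h = −2, and set u = V + P with u(0) = V₀ + P₀ > 0. Then u satisfies the logistic equation u' = u − u², hence u(t) = 1 / (1 + (1/(V₀+P₀) − 1) e^{−t}) for all t ≥ 0. -/
open Real Set NNReal

/-!
Adding the two equations, the interaction terms `-h P V` and `γ h P V` combine to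
`((γ - 1) h) P V = -2 P V`, which is exactly the cross term of `-(V + P)²`; hence `u = V + P`
solves the logistic equation `u' = u - u²`. The explicit curve `1 / (1 + (1/u₀ - 1) e^{-t})`
solves it too with the same initial value, and the two agree on `[0, ∞)` by uniqueness of
solutions: `x ↦ x - x²` is Lipschitz on bounded sets, and both solutions are bounded on
compact intervals.
-/

theorem hasDerivAt_add_of_predatorPrey {h γ : ℝ} (hrel : (γ - 1) * h = -2) {V P : ℝ → ℝ} {t : ℝ}
    (hV : HasDerivAt V (V t - V t ^ 2 - h * P t * V t) t)
    (hP : HasDerivAt P (P t - P t ^ 2 + γ * h * P t * V t) t) :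
    HasDerivAt (fun s => V s + P s) ((V t + P t) - (V t + P t) ^ 2) t :=
  (hV.add hP).congr_deriv (by linear_combination P t * V t * hrel)

theorem lipschitzOnWith_logistic (R : ℝ≥0) :
    LipschitzOnWith (1 + 2 * R) (fun x : ℝ => x - x ^ 2) (Metric.closedBall 0 R) := by
  refine LipschitzOnWith.of_dist_le_mul fun x hx y hy => ?_
  rw [mem_closedBall_zero_iff, Real.norm_eq_abs] at hx hy
  have hxy : |1 - x - y| ≤ 1 + 2 * R := by
    calc |1 - x - y| ≤ |1 - x| + |y| := abs_sub _ _
      _ ≤ |1| + |x| + |y| := by gcongr; exact abs_sub _ _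
      _ ≤ 1 + 2 * R := by rw [abs_one]; linarith
  calc dist (x - x ^ 2) (y - y ^ 2) = |1 - x - y| * |x - y| := by
        rw [Real.dist_eq, ← abs_mul]; ring_nf
    _ ≤ (1 + 2 * R) * dist x y := by rw [Real.dist_eq]; gcongr
    _ = ((1 + 2 * R : ℝ≥0) : ℝ) * dist x y := by push_cast; rfl

theorem exists_mem_closedBall_of_hasDerivAt_Icc {f f' : ℝ → ℝ} {a b : ℝ}
    (hf : ∀ t ∈ Icc a b, HasDerivAt f (f' t) t) :
    ∃ R : ℝ≥0, ∀ t ∈ Icc a b, f t ∈ Metric.closedBall 0 R := by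
  obtain ⟨C, hC⟩ := isCompact_Icc.exists_bound_of_continuousOn
    fun t ht => (hf t ht).continuousAt.continuousWithinAt
  exact ⟨C.toNNReal, fun t ht => mem_closedBall_zero_iff.mpr ((hC t ht).trans (le_coe_toNNReal C))⟩

theorem eqOn_Icc_of_hasDerivAt_logistic {f g : ℝ → ℝ} {a b : ℝ}
    (hf : ∀ t ∈ Icc a b, HasDerivAt f (f t - f t ^ 2) t)
    (hg : ∀ t ∈ Icc a b, HasDerivAt g (g t - g t ^ 2) t) (ha : f a = g a) :
    EqOn f g (Icc a b) := by
  obtain ⟨Rf, hRf⟩ := exists_mem_closedBall_of_hasDerivAt_Icc hf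
  obtain ⟨Rg, hRg⟩ := exists_mem_closedBall_of_hasDerivAt_Icc hg
  have hfR (t) (ht : t ∈ Ico a b) : f t ∈ Metric.closedBall 0 (max Rf Rg) :=
    Metric.closedBall_subset_closedBall (by simp) (hRf t (Ico_subset_Icc_self ht))
  have hgR (t) (ht : t ∈ Ico a b) : g t ∈ Metric.closedBall 0 (max Rf Rg) :=
    Metric.closedBall_subset_closedBall (by simp) (hRg t (Ico_subset_Icc_self ht))
  exact ODE_solution_unique_of_mem_Icc_right (v := fun _ x => x - x ^ 2)
    (fun _ _ => lipschitzOnWith_logistic (max Rf Rg))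
    (fun t ht => (hf t ht).continuousAt.continuousWithinAt)
    (fun t ht => (hf t (Ico_subset_Icc_self ht)).hasDerivWithinAt) hfR
    (fun t ht => (hg t ht).continuousAt.continuousWithinAt)
    (fun t ht => (hg t (Ico_subset_Icc_self ht)).hasDerivWithinAt) hgR ha

noncomputable def logisticCurve (u₀ t : ℝ) : ℝ := 1 / (1 + (1 / u₀ - 1) * exp (-t))

theorem logisticCurve_zero (u₀ : ℝ) : logisticCurve u₀ 0 = u₀ := by
  simp [logisticCurve]

theorem logisticCurve_denom_pos {u₀ t : ℝ} (hu₀ : 0 < u₀) (ht : 0 ≤ t) :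
    0 < 1 + (1 / u₀ - 1) * exp (-t) := by
  have he : exp (-t) ≤ 1 := exp_le_one_iff.mpr (neg_nonpos.mpr ht)
  have : 0 < exp (-t) / u₀ := by positivity
  calc (0 : ℝ) < (1 - exp (-t)) + exp (-t) / u₀ := by linarith
    _ = 1 + (1 / u₀ - 1) * exp (-t) := by ring

theorem hasDerivAt_logisticCurve {u₀ t : ℝ} (hu₀ : 0 < u₀) (ht : 0 ≤ t) :
    HasDerivAt (logisticCurve u₀) (logisticCurve u₀ t - logisticCurve u₀ t ^ 2) t := by
  have hD := (((hasDerivAt_neg t).exp).const_mul (1 / u₀ - 1)).const_add 1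
  have hpos := logisticCurve_denom_pos hu₀ ht
  refine ((hasDerivAt_const t (1 : ℝ)).div hD hpos.ne').congr_deriv ?_
  simp only [logisticCurve]
  field_simp
  ring

theorem stmt_15_general (h γ : ℝ) (hrel : (γ - 1) * h = -2)
    (V P : ℝ → ℝ)
    (hVode : ∀ t ≥ (0:ℝ), HasDerivAt V (V t - (V t)^2 - h * P t * V t) t)
    (hPode : ∀ t ≥ (0:ℝ), HasDerivAt P (P t - (P t)^2 + γ * h * P t * V t) t)
    (u : ℝ → ℝ) (hu : ∀ t, u t = V t + P t) (hu0 : 0 < u 0) :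
    (∀ t ≥ (0:ℝ), HasDerivAt u (u t - (u t)^2) t) ∧
    (∀ t ≥ (0:ℝ), u t = 1 / (1 + (1 / (V 0 + P 0) - 1) * Real.exp (-t))) := by
  obtain rfl : u = fun s => V s + P s := funext hu
  have hlogistic (t : ℝ) (ht : 0 ≤ t) : HasDerivAt (fun s => V s + P s) _ t :=
    hasDerivAt_add_of_predatorPrey hrel (hVode t ht) (hPode t ht)
  exact ⟨hlogistic, fun t ht => eqOn_Icc_of_hasDerivAt_logistic (fun s hs => hlogistic s hs.1)
    (fun s hs => hasDerivAt_logisticCurve hu0 hs.1) (logisticCurve_zero _).symm ⟨ht, le_rfl⟩⟩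

theorem stmt_15 (h γ : ℝ) (hh : 0 < h) (hγ : 0 ≤ γ) (hrel : (γ - 1) * h = -2)
    (V P : ℝ → ℝ)
    (hVpos : ∀ t ≥ (0:ℝ), 0 ≤ V t) (hPpos : ∀ t ≥ (0:ℝ), 0 ≤ P t)
    (hVode : ∀ t ≥ (0:ℝ), HasDerivAt V (V t - (V t)^2 - h * P t * V t) t)
    (hPode : ∀ t ≥ (0:ℝ), HasDerivAt P (P t - (P t)^2 + γ * h * P t * V t) t)
    (u : ℝ → ℝ) (hu : ∀ t, u t = V t + P t) (hu0 : 0 < u 0) :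
    (∀ t ≥ (0:ℝ), HasDerivAt u (u t - (u t)^2) t) ∧
    (∀ t ≥ (0:ℝ), u t = 1 / (1 + (1 / (V 0 + P 0) - 1) * Real.exp (-t))) :=
  stmt_15_general h γ hrel V P hVode hPode u hu hu0
end
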